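/- Let ω, q, p, p₀, h be real numbers with p₀ ≠ 0, ω·q ≠ 0, h > 0 and h² = p² + ω²q². Let μ^i_{jk} be the anti-commutative structure constants μ³₁₂ = 1, μ¹₂₃ = μ²₁₃ = −(2ω/p₀)·q, μ¹₃₁ = μ²₂₃ = (2/p₀)·p (all other independent components zero), and let ν^i_{jk} be the structure constants of sl(2): ν³₁₂ = 1, ν¹₃₁ = 2, ν²₂₃ = 2 (all other independent components zero). Define the 3×3 matrix A with entries A^i_j by A = (1/(2p₀))·[[(2p₀/(ωq))·(p + h), 2p₀, 0], [p − h, ωq, 0], [0, 0, 2h]]. Then A is invertible and Σ_s μ^s_{jk}·A^i_s = Σ_{l,m} ν^i_{lm}·A^l_j·A^m_k for all i, j, k ∈ {1,2,3}; hence the dynamically deformed algebra with multiplication μ is a Lie algebra isomorphic to sl(2). -/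

import Mathlib

/-! Both `μ` and `ν` are alternating in the lower indices, hence so are both sides of the
homomorphism equation in `(j, k)`, and it suffices to check the brackets `[e₁,e₂]`, `[e₁,e₃]` and
`[e₂,e₃]`. The matrix `A` maps `span(e₁, e₂)` to itself and `e₃` to `(h/p₀)·e₃`, and
`det A = h²/p₀²`. The brackets `[e₁,e₂]` and `[e₂,e₃]` are then preserved identically, while
`[e₁,e₃]` is preserved exactly because `h² = p² + ω²q²`, i.e. because `h` is the conserved `√(2H)`
of the oscillator. -/

/-- The deformed `sl(2)` structure constants: `μ³₁₂ = 1`,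
`μ¹₂₃ = μ²₁₃ = −(2ω/p₀)·q`, `μ¹₃₁ = μ²₂₃ = (2/p₀)·p`, antisymmetric in the
lower indices, all other components zero (indices `1,2,3` correspond to
`0,1,2`). -/
noncomputable def μDef (ω q p p₀ : ℝ) : Fin 3 → Fin 3 → Fin 3 → ℝ :=
  ![![![0, 0, -((2 / p₀) * p)],
      ![0, 0, -(2 * ω / p₀) * q],
      ![(2 / p₀) * p, (2 * ω / p₀) * q, 0]],
    ![![0, 0, -(2 * ω / p₀) * q],
      ![0, 0, (2 / p₀) * p],
      ![(2 * ω / p₀) * q, -((2 / p₀) * p), 0]],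
    ![![0, 1, 0], ![-1, 0, 0], ![0, 0, 0]]]

/-- Structure constants of `sl(2)`: `ν³₁₂ = 1`, `ν¹₃₁ = 2`, `ν²₂₃ = 2`,
antisymmetric in the lower indices, all other components zero. -/
def sl2ν : Fin 3 → Fin 3 → Fin 3 → ℝ :=
  ![![![0, 0, -2], ![0, 0, 0], ![2, 0, 0]],
    ![![0, 0, 0], ![0, 0, 2], ![0, -2, 0]],
    ![![0, 1, 0], ![-1, 0, 0], ![0, 0, 0]]]

/-- The matrix `A = (1/(2p₀))·[[(2p₀/(ωq))(p+h), 2p₀, 0],[p−h, ωq, 0],[0,0,2h]]`. -/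
noncomputable def Aiso (ω q p p₀ h : ℝ) : Matrix (Fin 3) (Fin 3) ℝ :=
  (1 / (2 * p₀)) •
    !![(2 * p₀ / (ω * q)) * (p + h), 2 * p₀, 0;
       p - h, ω * q, 0;
       0, 0, 2 * h]

theorem Finset.sum_sum_eq_zero_of_alternating {ι M : Type*} [Fintype ι] [AddCommGroup M]
    {f : ι → ι → M} (hdiag : ∀ l, f l l = 0) (hswap : ∀ l m, f m l = -f l m) :
    ∑ l, ∑ m, f l m = 0 := by
  rw [← Fintype.sum_prod_type']
  refine Finset.sum_ninvolution Prod.swap (fun x => ?_) (fun x hx hswapx => hx ?_)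
    (fun _ => Finset.mem_univ _) Prod.swap_swap
  · show f x.1 x.2 + f x.2 x.1 = 0
    rw [hswap x.1 x.2, add_neg_cancel]
  · obtain ⟨l, m⟩ := x
    obtain rfl : m = l := congrArg Prod.fst hswapx
    exact hdiag m

section StructureConstants

variable {ι R : Type*} [Fintype ι] [LinearOrder ι] [CommRing R]
  {μ ν : ι → ι → ι → R} {A : Matrix ι ι R}

theorem structureConstants_hom_of_lt
    (hμdiag : ∀ s j, μ s j j = 0) (hμswap : ∀ s j k, μ s k j = -μ s j k)
    (hνdiag : ∀ i l, ν i l l = 0) (hνswap : ∀ i l m, ν i m l = -ν i l m)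
    (hlt : ∀ i j k, j < k → ∑ s, μ s j k * A i s = ∑ l, ∑ m, ν i l m * A l j * A m k) :
    ∀ i j k, ∑ s, μ s j k * A i s = ∑ l, ∑ m, ν i l m * A l j * A m k := by
  intro i j k
  rcases lt_trichotomy j k with hjk | rfl | hkj
  · exact hlt i j k hjk
  · rw [Finset.sum_sum_eq_zero_of_alternating (by simp [hνdiag])
      (fun l m => by rw [hνswap]; ring)]
    simp [hμdiag]
  · have hswapped := hlt i k j hkj
    calc ∑ s, μ s j k * A i s = -∑ s, μ s k j * A i s := by
          rw [← Finset.sum_neg_distrib]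
          exact Finset.sum_congr rfl fun s _ => by rw [hμswap]; ring
      _ = -∑ l, ∑ m, ν i l m * A l k * A m j := by rw [hswapped]
      _ = ∑ l, ∑ m, ν i l m * A l j * A m k := by
          rw [Finset.sum_comm, ← Finset.sum_neg_distrib]
          refine Finset.sum_congr rfl fun m _ => ?_
          rw [← Finset.sum_neg_distrib]
          exact Finset.sum_congr rfl fun l _ => by rw [hνswap]; ring

end StructureConstants

theorem μDef_apply_self (ω q p p₀ : ℝ) (s j : Fin 3) : μDef ω q p p₀ s j j = 0 := by
  fin_cases s <;> fin_cases j <;> simp [μDef]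

theorem μDef_swap (ω q p p₀ : ℝ) (s j k : Fin 3) :
    μDef ω q p p₀ s k j = -μDef ω q p p₀ s j k := by
  fin_cases s <;> fin_cases j <;> fin_cases k <;> simp [μDef]

theorem sl2ν_apply_self (i l : Fin 3) : sl2ν i l l = 0 := by
  fin_cases i <;> fin_cases l <;> simp [sl2ν]

theorem sl2ν_swap (i l m : Fin 3) : sl2ν i m l = -sl2ν i l m := by
  fin_cases i <;> fin_cases l <;> fin_cases m <;> simp [sl2ν]

section Aiso

variable {ω q p p₀ h : ℝ}

theorem det_Aiso (hp₀ : p₀ ≠ 0) (hωq : ω * q ≠ 0) : (Aiso ω q p p₀ h).det = h ^ 2 / p₀ ^ 2 := by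
  obtain ⟨hω, hq⟩ := mul_ne_zero_iff.mp hωq
  simp only [Aiso, Matrix.det_fin_three, Matrix.smul_apply, Matrix.of_apply, Matrix.cons_val,
    smul_eq_mul, mul_zero, zero_mul, add_zero, sub_zero]
  field_simp
  ring

theorem isUnit_Aiso (hp₀ : p₀ ≠ 0) (hωq : ω * q ≠ 0) (hh : h ≠ 0) : IsUnit (Aiso ω q p p₀ h) := by
  rw [Matrix.isUnit_iff_isUnit_det, det_Aiso hp₀ hωq, isUnit_iff_ne_zero]
  positivity

theorem Aiso_bracket_zero_one (hp₀ : p₀ ≠ 0) (hωq : ω * q ≠ 0) (i : Fin 3) :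
    ∑ s, μDef ω q p p₀ s 0 1 * Aiso ω q p p₀ h i s
      = ∑ l, ∑ m, sl2ν i l m * Aiso ω q p p₀ h l 0 * Aiso ω q p p₀ h m 1 := by
  obtain ⟨hω, hq⟩ := mul_ne_zero_iff.mp hωq
  fin_cases i <;>
    simp only [μDef, sl2ν, Aiso, Fin.sum_univ_three, Matrix.smul_apply, Matrix.of_apply,
      Matrix.cons_val, Fin.reduceFinMk, smul_eq_mul, mul_zero, zero_mul, add_zero, zero_add]
  all_goals field_simp
  all_goals ring

theorem Aiso_bracket_zero_two (hp₀ : p₀ ≠ 0) (hωq : ω * q ≠ 0)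
    (hh2 : h ^ 2 = p ^ 2 + ω ^ 2 * q ^ 2) (i : Fin 3) :
    ∑ s, μDef ω q p p₀ s 0 2 * Aiso ω q p p₀ h i s
      = ∑ l, ∑ m, sl2ν i l m * Aiso ω q p p₀ h l 0 * Aiso ω q p p₀ h m 2 := by
  obtain ⟨hω, hq⟩ := mul_ne_zero_iff.mp hωq
  fin_cases i <;>
    simp only [μDef, sl2ν, Aiso, Fin.sum_univ_three, Matrix.smul_apply, Matrix.of_apply,
      Matrix.cons_val, Fin.reduceFinMk, smul_eq_mul, mul_zero, zero_mul, add_zero, zero_add]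
  all_goals field_simp
  all_goals linear_combination hh2

theorem Aiso_bracket_one_two (hp₀ : p₀ ≠ 0) (hωq : ω * q ≠ 0) (i : Fin 3) :
    ∑ s, μDef ω q p p₀ s 1 2 * Aiso ω q p p₀ h i s
      = ∑ l, ∑ m, sl2ν i l m * Aiso ω q p p₀ h l 1 * Aiso ω q p p₀ h m 2 := by
  obtain ⟨hω, hq⟩ := mul_ne_zero_iff.mp hωq
  fin_cases i <;>
    simp only [μDef, sl2ν, Aiso, Fin.sum_univ_three, Matrix.smul_apply, Matrix.of_apply,
      Matrix.cons_val, Fin.reduceFinMk, smul_eq_mul, mul_zero, zero_mul, add_zero, zero_add]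
  all_goals field_simp
  all_goals ring

end Aiso

/-- The dynamically deformed algebra is isomorphic to `sl(2)`: the matrix `A`
is invertible and satisfies `Σ_s μ^s_{jk}·A^i_s = Σ_{l,m} ν^i_{lm}·A^l_j·A^m_k`
for all `i, j, k`. -/
theorem deformed_sl2_isomorphic_sl2 (ω q p p₀ h : ℝ)
    (hp₀ : p₀ ≠ 0) (hωq : ω * q ≠ 0) (hh : 0 < h)
    (hh2 : h ^ 2 = p ^ 2 + ω ^ 2 * q ^ 2) :
    IsUnit (Aiso ω q p p₀ h) ∧
    ∀ i j k : Fin 3,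
      (∑ s : Fin 3, μDef ω q p p₀ s j k * Aiso ω q p p₀ h i s)
        = ∑ l : Fin 3, ∑ m : Fin 3,
            sl2ν i l m * Aiso ω q p p₀ h l j * Aiso ω q p p₀ h m k := by
  refine ⟨isUnit_Aiso hp₀ hωq hh.ne', structureConstants_hom_of_lt (μDef_apply_self ω q p p₀)
    (μDef_swap ω q p p₀) sl2ν_apply_self sl2ν_swap ?_⟩
  intro i j k hjk
  fin_cases j <;> fin_cases k <;> try exact absurd hjk (by decide)
  exacts [Aiso_bracket_zero_one hp₀ hωq i, Aiso_bracket_zero_two hp₀ hωq hh2 i,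
    Aiso_bracket_one_two hp₀ hωq i]
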